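/- arXiv:1009.1863 — 4 statements merged into one kernel-verified Lean document; each statement's English description precedes it below -/
import Mathlib

section
/- Let 0 < s_1 < s_2 < ... < s_k ≤ N be integers, S = {s_1,...,s_k}, τ ∈ ℝ, and ρ : ℤ → [0,1]. Define φ(i,n) = 1 - ρ(n) + ρ(n)·τ^{k-i+1}. Then Σ_{S ⊆ Y ⊆ [1,N]} τ^{σ(S,Y)} · Π_{n ∈ Y} ρ(n) · Π_{n ∈ [1,N]∖Y} (1-ρ(n)) = τ^{k(k+1)/2} · Π_{n ∈ S} ρ(n) · Π_{i=1}^k Π_{n ∈ (s_{i-1}, s_i)} φ(i,n), where s_0 = 0 and (s_{i-1}, s_i) denotes the integers strictly between s_{i-1} and s_i. -/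
/-!
Write `τ ^ σ(S, Y) = ∏ n ∈ Y, τ ^ c n` with `c n = #{u ∈ S | n ≤ u}`. The sum over `S ⊆ Y ⊆ [1, N]`
then factorises over the sites: those of `S` contribute `ρ n * τ ^ c n`, the others
`ρ n * τ ^ c n + (1 - ρ n)`. The sites of `S` give `∏ ρ` times `τ ^ σ(S, S) = τ ^ (k (k + 1) / 2)`.
The remaining sites are the gaps `(s (i - 1), s i)`, on which `c = k - i + 1`, and the tail
`(s k, N]`, on which `c = 0` so that every factor is `1`.
-/

/-- σ(U,V) = #{(u,v) : u ∈ U, v ∈ V, u ≥ v} for finite sets of integers. -/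
def sigmaPairs (U V : Finset ℤ) : ℕ :=
  ((U ×ˢ V).filter fun p => p.2 ≤ p.1).card

open Finset

theorem Finset.sum_Icc_prod_mul_prod_sdiff {ι R : Type*} [DecidableEq ι] [CommSemiring R]
    {S I : Finset ι} (h : S ⊆ I) (f g : ι → R) :
    ∑ Y ∈ Icc S I, (∏ i ∈ Y, f i) * ∏ i ∈ I \ Y, g i =
      (∏ i ∈ S, f i) * ∏ i ∈ I \ S, (f i + g i) := by
  have hdisj : ∀ T ∈ (I \ S).powerset, Disjoint S T := fun T hT =>
    disjoint_of_subset_right (mem_powerset.1 hT) disjoint_sdiff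
  rw [Icc_eq_image_powerset h, sum_image, prod_add, mul_sum]
  · refine sum_congr rfl fun T hT => ?_
    rw [prod_union (hdisj T hT), sdiff_sdiff_left, mul_assoc]; rfl
  · intro T hT T' hT' hTT'
    rw [← union_sdiff_cancel_left (hdisj T hT), ← union_sdiff_cancel_left (hdisj T' hT')]
    exact congrArg (· \ S) hTT'

lemma sigmaPairs_eq_sum_card (U V : Finset ℤ) :
    sigmaPairs U V = ∑ v ∈ V, #{u ∈ U | v ≤ u} := by
  rw [sigmaPairs, card_filter, sum_product_right]
  simp only [card_filter]

lemma sigmaPairs_self (S : Finset ℤ) : sigmaPairs S S = ∑ i ∈ range (#S + 1), i := by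
  induction S using Finset.induction_on_max with
  | empty => simp [sigmaPairs]
  | insert a S ha ih =>
    have ha' : a ∉ S := fun h => lt_irrefl a (ha a h)
    rw [sigmaPairs_eq_sum_card] at ih ⊢
    rw [sum_insert ha', card_insert_of_notMem ha', sum_range_succ, ← ih]
    have h_top : {u ∈ insert a S | a ≤ u} = {a} := by
      rw [filter_insert, if_pos le_rfl, filter_false_of_mem fun u hu => not_le.2 (ha u hu)]
      rfl
    have h_below : ∀ v ∈ S, #{u ∈ insert a S | v ≤ u} = #{u ∈ S | v ≤ u} + 1 := fun v hv => by
      rw [filter_insert, if_pos (ha v hv).le, card_insert_of_notMem (by simp [ha'])]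
    rw [h_top, sum_congr rfl h_below, sum_add_distrib, card_singleton, sum_const, smul_eq_mul,
      mul_one]
    omega

lemma exists_map_pred_lt_le_map {α : Type*} [LinearOrder α] (s : ℕ → α) {k : ℕ} {n : α}
    (h₀ : s 0 < n) (hk : n ≤ s k) : ∃ i ∈ Icc 1 k, s (i - 1) < n ∧ n ≤ s i := by
  classical
  have hex : ∃ j, n ≤ s j := ⟨k, hk⟩
  have hpos : Nat.find hex ≠ 0 := fun h => h₀.not_ge (h ▸ Nat.find_spec hex)
  exact ⟨Nat.find hex, mem_Icc.2 ⟨Nat.one_le_iff_ne_zero.2 hpos, Nat.find_min' hex hk⟩,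
    not_le.1 (Nat.find_min hex (by omega)), Nat.find_spec hex⟩

section StrictMonoOnIic

variable {α : Type*} [LinearOrder α] {s : ℕ → α} {k : ℕ}

lemma StrictMonoOn.map_le_map (hs : StrictMonoOn s (Set.Iic k)) {i j : ℕ} (hij : i ≤ j)
    (hjk : j ≤ k) : s i ≤ s j :=
  hs.monotoneOn (Set.mem_Iic.2 (hij.trans hjk)) (Set.mem_Iic.2 hjk) hij

lemma injOn_Icc_of_strictMonoOn_Iic (hs : StrictMonoOn s (Set.Iic k)) :
    Set.InjOn s (Icc 1 k) :=
  hs.injOn.mono (by simpa using Set.Icc_subset_Iic_self)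

lemma image_Icc_subset_Ioc [LocallyFiniteOrder α] (hs : StrictMonoOn s (Set.Iic k)) {N : α}
    (hN : s k ≤ N) : (Icc 1 k).image s ⊆ Ioc (s 0) N := by
  intro n hn
  obtain ⟨j, hj, rfl⟩ := mem_image.1 hn
  rw [mem_Icc] at hj
  exact mem_Ioc.2 ⟨hs (Set.mem_Iic.2 (Nat.zero_le k)) (Set.mem_Iic.2 hj.2) hj.1,
    (hs.map_le_map hj.2 le_rfl).trans hN⟩

lemma card_image_Icc (hs : StrictMonoOn s (Set.Iic k)) : #((Icc 1 k).image s) = k := by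
  rw [card_image_of_injOn (injOn_Icc_of_strictMonoOn_Iic hs), Nat.card_Icc, Nat.add_sub_cancel]

lemma card_filter_le_image_Icc (hs : StrictMonoOn s (Set.Iic k)) (n : α) :
    #{u ∈ (Icc 1 k).image s | n ≤ u} = #{j ∈ Icc 1 k | n ≤ s j} := by
  rw [filter_image,
    card_image_of_injOn ((injOn_Icc_of_strictMonoOn_Iic hs).mono (filter_subset _ _))]

lemma card_filter_le_image_Icc_of_lt_of_le (hs : StrictMonoOn s (Set.Iic k)) {i : ℕ}
    (hi : i ∈ Icc 1 k) {n : α} (h₁ : s (i - 1) < n) (h₂ : n ≤ s i) :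
    #{u ∈ (Icc 1 k).image s | n ≤ u} = k - i + 1 := by
  rw [mem_Icc] at hi
  have h_filter : {j ∈ Icc 1 k | n ≤ s j} = Icc i k := by
    ext j
    simp only [mem_filter, mem_Icc]
    constructor
    · rintro ⟨⟨-, hjk⟩, hnj⟩
      refine ⟨not_lt.1 fun hji => ?_, hjk⟩
      have := hs.map_le_map (Nat.le_sub_one_of_lt hji) (by omega)
      exact (hnj.trans this).not_gt h₁
    · rintro ⟨hij, hjk⟩
      exact ⟨⟨by omega, hjk⟩, h₂.trans (hs.map_le_map hij hjk)⟩
  rw [card_filter_le_image_Icc hs, h_filter, Nat.card_Icc]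
  omega

lemma card_filter_le_image_Icc_of_lt (hs : StrictMonoOn s (Set.Iic k)) {n : α} (hn : s k < n) :
    #{u ∈ (Icc 1 k).image s | n ≤ u} = 0 := by
  rw [card_eq_zero, filter_eq_empty_iff, forall_mem_image]
  intro j hj
  rw [mem_Icc] at hj
  exact not_le.2 ((hs.map_le_map hj.2 le_rfl).trans_lt hn)

variable [LocallyFiniteOrder α]

lemma Ioc_sdiff_image_Icc (hs : StrictMonoOn s (Set.Iic k)) {N : α} (hN : s k ≤ N) :
    Ioc (s 0) N \ (Icc 1 k).image s =
      (Icc 1 k).biUnion (fun i => Ioo (s (i - 1)) (s i)) ∪ Ioc (s k) N := by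
  ext n
  simp only [mem_sdiff, mem_union, mem_biUnion, mem_Icc, mem_Ioo, mem_Ioc, mem_image, not_exists,
    not_and]
  constructor
  · rintro ⟨⟨h₀, hnN⟩, hnS⟩
    rcases le_or_gt n (s k) with hnk | hnk
    · obtain ⟨i, hi, h₁, h₂⟩ := exists_map_pred_lt_le_map s h₀ hnk
      rw [mem_Icc] at hi
      exact Or.inl ⟨i, hi, h₁, h₂.lt_of_ne fun h => hnS i hi h.symm⟩
    · exact Or.inr ⟨hnk, hnN⟩
  · rintro (⟨i, ⟨hi, hik⟩, h₁, h₂⟩ | ⟨hkn, hnN⟩)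
    · have := hs.map_le_map (Nat.zero_le (i - 1)) (by omega)
      have := hs.map_le_map hik le_rfl
      refine ⟨⟨by order, by order⟩, fun j hj hjn => ?_⟩
      rcases lt_or_ge j i with hji | hij
      · have := hs.map_le_map (Nat.le_sub_one_of_lt hji) (by omega)
        order
      · have := hs.map_le_map hij hj.2
        order
    · have := hs.map_le_map (Nat.zero_le k) le_rfl
      exact ⟨⟨by order, hnN⟩, fun j hj hjn => by have := hs.map_le_map hj.2 le_rfl; order⟩

lemma prod_Ioc_sdiff_image_Icc {M : Type*} [CommMonoid M] (hs : StrictMonoOn s (Set.Iic k))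
    {N : α} (hN : s k ≤ N) (g : α → ℕ → M) (hg : ∀ n, g n 0 = 1) :
    ∏ n ∈ Ioc (s 0) N \ (Icc 1 k).image s, g n #{u ∈ (Icc 1 k).image s | n ≤ u} =
      ∏ i ∈ Icc 1 k, ∏ n ∈ Ioo (s (i - 1)) (s i), g n (k - i + 1) := by
  rw [Ioc_sdiff_image_Icc hs hN, prod_union, prod_biUnion, prod_eq_one (s := Ioc (s k) N), mul_one]
  · refine prod_congr rfl fun i hi => prod_congr rfl fun n hn => ?_
    rw [card_filter_le_image_Icc_of_lt_of_le hs hi (mem_Ioo.1 hn).1 (mem_Ioo.1 hn).2.le]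
  · intro n hn
    rw [card_filter_le_image_Icc_of_lt hs (mem_Ioc.1 hn).1, hg]
  · intro i hi j hj hij
    simp only [coe_Icc, Set.mem_Icc] at hi hj
    refine disjoint_left.2 fun n hni hnj => ?_
    rw [mem_Ioo] at hni hnj
    rcases lt_or_gt_of_ne hij with h | h <;>
    · have := hs.map_le_map (Nat.le_sub_one_of_lt h) (by omega)
      order
  · refine disjoint_left.2 fun n hn hn' => ?_
    obtain ⟨i, hi, -, h₂⟩ := by simpa only [mem_biUnion, mem_Ioo] using hn
    have := hs.map_le_map (mem_Icc.1 hi).2 le_rfl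
    have := (mem_Ioc.1 hn').1
    order

end StrictMonoOnIic

theorem bernoulli_sigma_average_general (k : ℕ) (N : ℤ) (s : ℕ → ℤ) (hs0 : s 0 = 0)
    (hmono : ∀ i, i < k → s i < s (i + 1))
    (hsN : s k ≤ N)
    (S : Finset ℤ) (hS : S = (Finset.Icc 1 k).image s)
    (τ : ℝ) (ρ : ℤ → ℝ) :
    ∑ Y ∈ (Finset.Icc 1 N).powerset.filter (fun Y => S ⊆ Y),
        τ ^ sigmaPairs S Y * (∏ n ∈ Y, ρ n) * ∏ n ∈ Finset.Icc 1 N \ Y, (1 - ρ n) =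
      τ ^ (k * (k + 1) / 2) * (∏ n ∈ S, ρ n) *
        ∏ i ∈ Finset.Icc 1 k, ∏ n ∈ Finset.Ioo (s (i - 1)) (s i),
          (1 - ρ n + ρ n * τ ^ (k - i + 1)) := by
  have hs : StrictMonoOn s (Set.Iic k) := strictMonoOn_Iic_of_lt_succ hmono
  have hI : Icc 1 N = Ioc (s 0) N := by
    ext n
    simp only [mem_Icc, mem_Ioc, hs0]
    omega
  subst hS
  set c : ℤ → ℕ := fun n => #{u ∈ (Icc 1 k).image s | n ≤ u}
  calc _ = ∑ Y ∈ Icc ((Icc 1 k).image s) (Icc 1 N),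
          (∏ n ∈ Y, ρ n * τ ^ c n) * ∏ n ∈ Icc 1 N \ Y, (1 - ρ n) := by
        rw [Icc_eq_filter_powerset]
        refine sum_congr rfl fun Y _ => ?_
        rw [sigmaPairs_eq_sum_card, ← prod_pow_eq_pow_sum, prod_mul_distrib,
          mul_comm (∏ n ∈ Y, ρ n)]
    _ = (∏ n ∈ (Icc 1 k).image s, ρ n * τ ^ c n) *
          ∏ n ∈ Icc 1 N \ (Icc 1 k).image s, (ρ n * τ ^ c n + (1 - ρ n)) :=
        sum_Icc_prod_mul_prod_sdiff (hI ▸ image_Icc_subset_Ioc hs hsN) _ _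
    _ = _ := by
        rw [prod_mul_distrib, prod_pow_eq_pow_sum, ← sigmaPairs_eq_sum_card, sigmaPairs_self,
          card_image_Icc hs, sum_range_id, hI,
          prod_Ioc_sdiff_image_Icc hs hsN (fun n m => ρ n * τ ^ m + (1 - ρ n)) (by simp),
          Nat.add_sub_cancel, Nat.mul_comm (k + 1) k, mul_comm (∏ n ∈ _, ρ n)]
        simp only [add_comm (ρ _ * _)]

/-- The key averaging identity: for `S = {s 1 < ⋯ < s k} ⊆ [1,N]` (with `s 0 = 0`),
`∑_{S ⊆ Y ⊆ [1,N]} τ^{σ(S,Y)} ∏_{n∈Y} ρ n ∏_{n∈[1,N]∖Y} (1-ρ n)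
  = τ^{k(k+1)/2} ∏_{n∈S} ρ n ∏_{i=1}^k ∏_{n∈(s(i-1), s i)} φ(i,n)`,
where `φ(i,n) = 1 - ρ n + ρ n · τ^{k-i+1}`. -/
theorem bernoulli_sigma_average (k : ℕ) (N : ℤ) (s : ℕ → ℤ) (hs0 : s 0 = 0)
    (hmono : ∀ i, i < k → s i < s (i + 1))
    (hpos : ∀ i, 1 ≤ i → i ≤ k → 0 < s i) (hsN : s k ≤ N)
    (S : Finset ℤ) (hS : S = (Finset.Icc 1 k).image s)
    (τ : ℝ) (ρ : ℤ → ℝ) (hρ : ∀ n, 0 ≤ ρ n ∧ ρ n ≤ 1) :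
    ∑ Y ∈ (Finset.Icc 1 N).powerset.filter (fun Y => S ⊆ Y),
        τ ^ sigmaPairs S Y * (∏ n ∈ Y, ρ n) * ∏ n ∈ Finset.Icc 1 N \ Y, (1 - ρ n) =
      τ ^ (k * (k + 1) / 2) * (∏ n ∈ S, ρ n) *
        ∏ i ∈ Finset.Icc 1 k, ∏ n ∈ Finset.Ioo (s (i - 1)) (s i),
          (1 - ρ n + ρ n * τ ^ (k - i + 1)) :=
  bernoulli_sigma_average_general k N s hs0 hmono hsN S hS τ ρ
end

section
/- Let τ, ρ be complex numbers with 0 ≤ ρ ≤ 1 and τ ≥ 0 real (or more generally parameters for which the series converges), and ξ_1, ..., ξ_k nonzero complex numbers such that |1 - ρ + ρτ^{k-i+1}| < |ξ_i···ξ_k| for every i. Set φ_i = 1 - ρ + ρ·τ^{k-i+1}. Then Σ_{0 < s_1 < ... < s_k} Π_{i=1}^k ( ρ · ξ_i^{-s_i} · φ_i^{s_i - s_{i-1} - 1} ) = Π_{i=1}^k ρ/(ξ_i·ξ_{i+1}···ξ_k - 1 + ρ - τ^{k-i+1}·ρ), where s_0 = 0. -/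
/-!
Recording a sequence `0 = s 0 < s 1 < ⋯ < s k` by its gaps `g i = s (i+1) - s i - 1` identifies
the index set with `Fin k → ℕ`, and then `s (i+1) = ∑_{j ≤ i} (g j + 1)`. Exchanging the two
products turns `∏ ξ_i ^ (-s_{i+1})` into `∏ Ξ_j ^ (-(g_j + 1))` with `Ξ_j = ξ_j ⋯ ξ_{k-1}`, so the
summand factors as `∏_i ρ φ_i ^ g_i Ξ_i ^ (-(g_i + 1))` and the series is a product of `k`
absolutely convergent geometric series with ratios `φ_i / Ξ_i`.
-/

open Finset

section PiProduct

variable {R β : Type*} [NormedCommRing R]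

theorem summable_norm_prod_pi : ∀ {k : ℕ} {f : Fin k → β → R},
    (∀ i, Summable fun b => ‖f i b‖) → Summable fun g : Fin k → β => ‖∏ i, f i (g i)‖
  | 0, f, _ => by simpa using summable_of_hasFiniteSupport (Set.toFinite _)
  | n + 1, f, hf => by
    rw [← (Fin.consEquiv fun _ => β).summable_iff]
    simpa [Function.comp_def, Fin.prod_univ_succ] using
      (hf 0).mul_norm (summable_norm_prod_pi fun i => hf i.succ)

theorem hasSum_prod_pi [CompleteSpace R] : ∀ {k : ℕ} {f : Fin k → β → R} {a : Fin k → R},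
    (∀ i, HasSum (f i) (a i)) → (∀ i, Summable fun b => ‖f i b‖) →
      HasSum (fun g : Fin k → β => ∏ i, f i (g i)) (∏ i, a i)
  | 0, f, a, _, _ => by simp
  | n + 1, f, a, hf, hf' => by
    rw [← (Fin.consEquiv fun _ => β).hasSum_iff]
    let tail : (Fin n → β) → R := fun g => ∏ i, f i.succ (g i)
    have htail : HasSum tail (∏ i : Fin n, a i.succ) :=
      hasSum_prod_pi (fun i => hf i.succ) fun i => hf' i.succ
    have hprod : Summable fun p : β × (Fin n → β) => f 0 p.1 * tail p.2 :=
      summable_mul_of_summable_norm (hf' 0) (summable_norm_prod_pi fun i => hf' i.succ)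
    simpa [Function.comp_def, Fin.prod_univ_succ] using (hf 0).mul htail hprod

end PiProduct

theorem hasSum_pow_mul_inv_pow_succ {K : Type*} [NormedField K] [CompleteSpace K] {a b : K}
    (h : ‖a‖ < ‖b‖) : HasSum (fun n : ℕ => a ^ n * b⁻¹ ^ (n + 1)) (b - a)⁻¹ := by
  have hb : b ≠ 0 := norm_pos_iff.mp ((norm_nonneg a).trans_lt h)
  have hratio : ‖a / b‖ < 1 := by rwa [norm_div, div_lt_one (norm_pos_iff.mpr hb)]
  have hterm : (fun n : ℕ => a ^ n * b⁻¹ ^ (n + 1)) = fun n => b⁻¹ * (a / b) ^ n := by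
    funext n
    rw [div_eq_mul_inv, mul_pow, pow_succ]
    ring
  have hsum : (b - a)⁻¹ = b⁻¹ * (1 - a / b)⁻¹ := by
    rw [← mul_inv, mul_sub, mul_one, mul_div_cancel₀ _ hb]
  rw [hterm, hsum]
  exact (hasSum_geometric_of_norm_lt_one hratio).mul_left b⁻¹

theorem Fin.partialSum_succ_eq_sum_Iic {M : Type*} [AddCommMonoid M] {k : ℕ} (c : Fin k → M)
    (i : Fin k) : Fin.partialSum c i.succ = ∑ j ∈ Iic i, c j := by
  rw [Fin.partialSum, List.sum_take_ofFn]
  refine sum_congr ?_ fun _ _ => rfl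
  ext j
  simp only [mem_filter, mem_univ, true_and, mem_Iic, Fin.val_succ]
  omega

theorem prod_pow_partialSum_succ {M : Type*} [CommMonoid M] {k : ℕ} (x : Fin k → M)
    (c : Fin k → ℕ) : ∏ i, x i ^ Fin.partialSum c i.succ = ∏ j, (∏ i ∈ Ici j, x i) ^ c j := by
  simp_rw [Fin.partialSum_succ_eq_sum_Iic, ← prod_pow_eq_pow_sum, ← prod_pow]
  exact prod_comm' fun i j => by simp

def gapEquiv (k : ℕ) : (Fin k → ℕ) ≃ {s : Fin (k + 1) → ℕ // s 0 = 0 ∧ StrictMono s} where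
  toFun g := ⟨Fin.partialSum (g · + 1), Fin.partialSum_zero _,
    Fin.strictMono_iff_lt_succ.2 fun i => by simp [Fin.partialSum_succ]⟩
  invFun s i := s.1 i.succ - s.1 i.castSucc - 1
  left_inv g := by funext i; simp [Fin.partialSum_succ]
  right_inv := by
    rintro ⟨s, hs0, hs⟩
    refine Subtype.ext <| funext fun i =>
      Fin.induction (by simpa using hs0.symm) (fun i ih => ?_) i
    have hlt := hs (Fin.castSucc_lt_succ (i := i))
    dsimp only at ih ⊢
    rw [Fin.partialSum_succ, ih]
    omega

theorem prod_zpow_neg_gapEquiv {K : Type*} [Field K] {k : ℕ} (ξ : Fin k → K) (g : Fin k → ℕ) :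
    ∏ i, ξ i ^ (-((gapEquiv k g).1 i.succ : ℤ)) = ∏ j, (∏ i ∈ Ici j, ξ i)⁻¹ ^ (g j + 1) := by
  simp_rw [zpow_neg, zpow_natCast, ← inv_pow, ← prod_inv_distrib]
  exact prod_pow_partialSum_succ _ _

theorem prod_gapEquiv_eq {K : Type*} [Field K] {k : ℕ} (ρ : K) (φ ξ : Fin k → K)
    (g : Fin k → ℕ) :
    ∏ i, ρ * ξ i ^ (-((gapEquiv k g).1 i.succ : ℤ)) *
        φ i ^ ((gapEquiv k g).1 i.succ - (gapEquiv k g).1 i.castSucc - 1) =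
      ∏ i, ρ * (φ i ^ g i * (∏ j ∈ Ici i, ξ j)⁻¹ ^ (g i + 1)) := by
  have hgap (i : Fin k) : (gapEquiv k g).1 i.succ - (gapEquiv k g).1 i.castSucc - 1 = g i :=
    congrFun ((gapEquiv k).symm_apply_apply g) i
  calc _ = (∏ i, ρ * φ i ^ g i) * ∏ i, ξ i ^ (-((gapEquiv k g).1 i.succ : ℤ)) := by
        rw [← prod_mul_distrib]
        exact prod_congr rfl fun i _ => by rw [hgap]; ring
    _ = _ := by
        rw [prod_zpow_neg_gapEquiv, ← prod_mul_distrib]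
        simp only [mul_assoc]

theorem step_bernoulli_identity_general (k : ℕ) (τ ρ : ℂ) (ξ : Fin k → ℂ)
    (h : ∀ i : Fin k,
      ‖1 - ρ + ρ * τ ^ (k - (i : ℕ))‖ <
        ‖∏ j ∈ Finset.Ici i, ξ j‖) :
    HasSum
      (fun s : {s : Fin (k + 1) → ℕ // s 0 = 0 ∧ StrictMono s} =>
        ∏ i : Fin k,
          ρ * ξ i ^ (-(s.1 i.succ : ℤ)) *
            (1 - ρ + ρ * τ ^ (k - (i : ℕ))) ^ (s.1 i.succ - s.1 i.castSucc - 1))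
      (∏ i : Fin k,
        ρ / ((∏ j ∈ Finset.Ici i, ξ j) - 1 + ρ - τ ^ (k - (i : ℕ)) * ρ)) := by
  set φ : Fin k → ℂ := fun i => 1 - ρ + ρ * τ ^ (k - (i : ℕ))
  set Ξ : Fin k → ℂ := fun i => ∏ j ∈ Ici i, ξ j
  have hgeom (i : Fin k) : HasSum (fun n => ρ * (φ i ^ n * (Ξ i)⁻¹ ^ (n + 1)))
      (ρ / (Ξ i - 1 + ρ - τ ^ (k - (i : ℕ)) * ρ)) := by
    rw [show ρ / (Ξ i - 1 + ρ - τ ^ (k - (i : ℕ)) * ρ) = ρ * (Ξ i - φ i)⁻¹ by ring]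
    exact (hasSum_pow_mul_inv_pow_succ (h i)).mul_left ρ
  have hprod := hasSum_prod_pi hgeom fun i => summable_norm_iff.mpr (hgeom i).summable
  rw [← (gapEquiv k).hasSum_iff]
  exact hprod.congr_fun fun g => prod_gapEquiv_eq ρ φ ξ g

/-- Step Bernoulli identity: with `φ i = 1 - ρ + ρ τ^{k-i}` (0-indexed `i`, matching the
1-indexed `k-i+1`), nonzero `ξ i`, and `|φ i| < |ξ i ⋯ ξ (k-1)|` for all `i`
(parameters for which the series converges),
`∑_{0 = s 0 < s 1 < ⋯ < s k} ∏_i ρ · ξ i ^ (-s (i+1)) · (φ i)^{s (i+1) - s i - 1}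
  = ∏_i ρ / (ξ i ⋯ ξ (k-1) - 1 + ρ - τ^{k-i} ρ)`,
with absolute convergence (`HasSum` over `ℂ`). -/
theorem step_bernoulli_identity (k : ℕ) (τ ρ : ℂ) (ξ : Fin k → ℂ) (hξ : ∀ i, ξ i ≠ 0)
    (h : ∀ i : Fin k,
      ‖1 - ρ + ρ * τ ^ (k - (i : ℕ))‖ <
        ‖∏ j ∈ Finset.Ici i, ξ j‖) :
    HasSum
      (fun s : {s : Fin (k + 1) → ℕ // s 0 = 0 ∧ StrictMono s} =>
        ∏ i : Fin k,
          ρ * ξ i ^ (-(s.1 i.succ : ℤ)) *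
            (1 - ρ + ρ * τ ^ (k - (i : ℕ))) ^ (s.1 i.succ - s.1 i.castSucc - 1))
      (∏ i : Fin k,
        ρ / ((∏ j ∈ Finset.Ici i, ξ j) - 1 + ρ - τ ^ (k - (i : ℕ)) * ρ)) :=
  step_bernoulli_identity_general k τ ρ ξ h
end

section
/- Let m ≥ 2, 0 ≤ ν < m, and let ρ : ℤ → [0,1] be the m-periodic function with ρ(n) = ρ when n ≡ ν (mod m) and ρ(n) = 0 otherwise, where ρ ∈ [0,1] is a constant. Define the m×m matrices A_i (indices 0 ≤ μ, ν' ≤ m-1) by A_i(μ,ν') = [ (ξ_i···ξ_k)^m · ξ_i^{-ν'} · ρ(ν') · Π_{n=μ+1}^{ν'-1} φ(i,n) ] / [ (ξ_i···ξ_k)^m - Π_{n=1}^m φ(i,n) ] if μ < ν', and A_i(μ,ν') = [ ξ_i^{-ν'} · ρ(ν') · Π_{n=μ+1}^{ν'+m-1} φ(i,n) ] / [ (ξ_i···ξ_k)^m - Π_{n=1}^m φ(i,n) ] if μ ≥ ν', where φ(i,n) = 1 - ρ(n) + ρ(n)τ^{k-i+1}. Then the (0-th row) total of the matrix product A_1·A_2···A_k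 applied to the all-ones vector equals (ξ_1···ξ_k)^{m-ν} · Π_{i=1}^k ρ/((ξ_i···ξ_k)^m - (1 - ρ + ρτ^{k-i+1})) when 0 < ν < m, and equals Π_{i=1}^k ρ/((ξ_i···ξ_k)^m - (1 - ρ + ρτ^{k-i+1})) when ν = 0. -/
lemma col_support_prod {m : ℕ} (νf : Fin m) :
    ∀ (L : List (Matrix (Fin m) (Fin m) ℂ)), (∀ N ∈ L, ∀ μ w, w ≠ νf → N μ w = 0) →
    ∀ (M : Matrix (Fin m) (Fin m) ℂ), (∀ μ w, w ≠ νf → M μ w = 0) →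
      (∀ μ w, w ≠ νf → ((M :: L).prod) μ w = 0) ∧
      (∀ μ : Fin m, ((M :: L).prod) μ νf = M μ νf * (L.map fun N => N νf νf).prod) := by
  intro L
  induction L with
  | nil => intro _ M hM; refine ⟨fun μ w hw => by simp [hM μ w hw], fun μ => by simp⟩
  | cons N L ih =>
    intro hNL M hM
    have hN : ∀ μ w, w ≠ νf → N μ w = 0 := hNL N (by simp)
    have hL : ∀ P ∈ L, ∀ μ w, w ≠ νf → P μ w = 0 := fun P hP => hNL P (by simp [hP])
    obtain ⟨hQ0, hQν⟩ := ih hL N hN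
    have hprod : ((M :: N :: L).prod) = M * ((N :: L).prod) := by simp
    constructor
    · intro μ w hw
      rw [hprod, Matrix.mul_apply]
      exact Finset.sum_eq_zero fun v _ => by rw [hQ0 v w hw, mul_zero]
    · intro μ
      rw [hprod, Matrix.mul_apply]
      rw [Finset.sum_eq_single νf (fun v _ hv => by rw [hM μ v hv, zero_mul])
        (fun h => absurd (Finset.mem_univ νf) h)]
      rw [hQν νf, List.map_cons, List.prod_cons]


/-- Collapse of the periodic matrices for `ρ` supported on one residue class:
let `m ≥ 2`, `0 ≤ ν < m`, `ρfun` the `m`-periodic function equal to the constant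
`ρ₀ ∈ [0,1]` on `n ≡ ν (mod m)` and `0` otherwise, `φ i n = 1 - ρfun n + ρfun n · τ^{k-i}`
(0-indexed `i`, matching `τ^{k-i+1}` in 1-indexed notation), and `A i` the `m×m`
matrices of formula (5) of the paper.  Then the sum of the top-row entries of
`A 0 · A 1 ⋯ A (k-1)` equals `∏_i ρ₀/((ξ i ⋯ ξ (k-1))^m - (1-ρ₀+ρ₀τ^{k-i}))`, times
the extra factor `(ξ 0 ⋯ ξ (k-1))^{m-ν}` when `0 < ν < m`. -/
theorem periodic_single_residue_collapse (k m : ℕ) (hm : 2 ≤ m) (ν : ℕ) (hν : ν < m)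
    (ρ₀ : ℝ) (hρ₀ : 0 ≤ ρ₀ ∧ ρ₀ ≤ 1) (τ : ℂ) (ξ : Fin k → ℂ) (hξ : ∀ i, ξ i ≠ 0)
    (ρfun : ℤ → ℂ)
    (hρ : ∀ n : ℤ, ρfun n = if n % (m : ℤ) = (ν : ℤ) then (ρ₀ : ℂ) else 0)
    (φ : Fin k → ℤ → ℂ)
    (hφ : ∀ i n, φ i n = 1 - ρfun n + ρfun n * τ ^ (k - (i : ℕ)))
    (hden : ∀ i : Fin k,
      (∏ j ∈ Finset.Ici i, ξ j) ^ m - ∏ n ∈ Finset.Icc (1 : ℤ) m, φ i n ≠ 0)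
    (A : Fin k → Matrix (Fin m) (Fin m) ℂ)
    (hA : ∀ (i : Fin k) (μ ν' : Fin m), A i μ ν' =
      if (μ : ℕ) < (ν' : ℕ) then
        ((∏ j ∈ Finset.Ici i, ξ j) ^ m * ξ i ^ (-((ν' : ℕ) : ℤ)) *
            ρfun ((ν' : ℕ) : ℤ) * ∏ n ∈ Finset.Ioo ((μ : ℕ) : ℤ) ((ν' : ℕ) : ℤ), φ i n) /
          ((∏ j ∈ Finset.Ici i, ξ j) ^ m - ∏ n ∈ Finset.Icc (1 : ℤ) m, φ i n)
      else
        (ξ i ^ (-((ν' : ℕ) : ℤ)) * ρfun ((ν' : ℕ) : ℤ) *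
            ∏ n ∈ Finset.Ioo ((μ : ℕ) : ℤ) (((ν' : ℕ) : ℤ) + m), φ i n) /
          ((∏ j ∈ Finset.Ici i, ξ j) ^ m - ∏ n ∈ Finset.Icc (1 : ℤ) m, φ i n))
    (hk : 0 < k) :
    ∑ w : Fin m, (List.ofFn A).prod ⟨0, by omega⟩ w =
      (if ν = 0 then 1 else (∏ j : Fin k, ξ j) ^ (m - ν)) *
        ∏ i : Fin k,
          (ρ₀ : ℂ) /
            ((∏ j ∈ Finset.Ici i, ξ j) ^ m -
              (1 - (ρ₀ : ℂ) + (ρ₀ : ℂ) * τ ^ (k - (i : ℕ)))) := by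
  obtain ⟨k, rfl⟩ : ∃ k', k = k' + 1 := ⟨k - 1, by omega⟩
  set νf : Fin m := ⟨ν, hν⟩ with hνf
  have hνfval : ((νf : ℕ) : ℤ) = (ν : ℤ) := rfl
  -- basic facts about ρfun on Fin m
  have hρfin : ∀ w : Fin m, ρfun ((w : ℕ) : ℤ) = if w = νf then (ρ₀ : ℂ) else 0 := by
    intro w
    rw [hρ, Int.emod_eq_of_lt (by exact_mod_cast Nat.zero_le _) (by exact_mod_cast w.isLt)]
    by_cases h : w = νf
    · subst h; simp [hνfval]
    · rw [if_neg h, if_neg]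
      intro hc
      exact h (Fin.ext (by exact_mod_cast hc))
  have hφ1 : ∀ (i : Fin (k + 1)) (n : ℤ), n % (m : ℤ) ≠ (ν : ℤ) → φ i n = 1 := by
    intro i n hn; rw [hφ, hρ, if_neg hn]; ring
  have hdvd : ∀ n : ℤ, n % (m : ℤ) = (ν : ℤ) → (m : ℤ) ∣ (n - ν) := by
    intro n hn
    have hνm : (ν : ℤ) % m = ν :=
      Int.emod_eq_of_lt (by positivity) (by exact_mod_cast hν)
    apply Int.dvd_of_emod_eq_zero
    rw [Int.sub_emod, hn, hνm, sub_self, Int.zero_emod]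
  have hkey : ∀ n : ℤ, n % (m : ℤ) = (ν : ℤ) → -(m : ℤ) < n - ν → n - ν < m → n = ν := by
    intro n hn h1 h2
    by_contra hne
    have hd := hdvd n hn
    have : (m : ℤ) ≤ |n - ν| :=
      Int.le_of_dvd (abs_pos.mpr (sub_ne_zero.mpr fun hc => hne hc)) ((dvd_abs _ _).mpr hd)
    have habs : |n - ν| < m := abs_lt.mpr ⟨h1, h2⟩
    linarith
  have hprod_one : ∀ (i : Fin (k + 1)) (a b : ℤ),
      (∀ n : ℤ, a < n → n < b → n ≠ (ν : ℤ) ∧ -(m : ℤ) < n - ν ∧ n - ν < m) →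
      ∏ n ∈ Finset.Ioo a b, φ i n = 1 := by
    intro i a b h
    apply Finset.prod_eq_one
    intro n hn
    rw [Finset.mem_Ioo] at hn
    obtain ⟨h1, h2, h3⟩ := h n hn.1 hn.2
    exact hφ1 i n fun hc => h1 (hkey n hc h2 h3)
  -- the Icc product
  have hIcc : ∀ i : Fin (k + 1), ∏ n ∈ Finset.Icc (1 : ℤ) m, φ i n =
      1 - (ρ₀ : ℂ) + (ρ₀ : ℂ) * τ ^ (k + 1 - (i : ℕ)) := by
    intro i
    have hmem : (if ν = 0 then (m : ℤ) else ν) ∈ Finset.Icc (1 : ℤ) m := by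
      rw [Finset.mem_Icc]; split <;> omega
    rw [Finset.prod_eq_single_of_mem _ hmem]
    · rw [hφ, hρ, if_pos]
      split
      · rename_i h0
        subst h0
        simp [Int.emod_self]
      · rename_i h0
        exact Int.emod_eq_of_lt (by omega) (by exact_mod_cast hν)
    · intro b hb hbne
      rw [Finset.mem_Icc] at hb
      apply hφ1
      intro hc
      apply hbne
      rcases Nat.eq_zero_or_pos ν with h0 | hpos
      · have hd := hdvd b hc
        have hble : (m : ℤ) ≤ b - ν := Int.le_of_dvd (by omega) hd
        rw [if_pos h0]; omega
      · have := hkey b hc (by omega) (by omega)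
        rw [if_neg (by omega)]; omega
  -- column support
  have hA0 : ∀ (i : Fin (k + 1)) (μ w : Fin m), w ≠ νf → A i μ w = 0 := by
    intro i μ w hw
    rw [hA, hρfin, if_neg hw]
    split <;> simp
  -- diagonal entries
  have hdiag : ∀ i : Fin (k + 1), A i νf νf =
      ξ i ^ (-(ν : ℤ)) * (ρ₀ : ℂ) /
        ((∏ j ∈ Finset.Ici i, ξ j) ^ m - (1 - (ρ₀ : ℂ) + (ρ₀ : ℂ) * τ ^ (k + 1 - (i : ℕ)))) := by
    intro i
    rw [hA, if_neg (lt_irrefl _), hρfin, if_pos rfl, hIcc, hνfval,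
      hprod_one i _ _ (fun n h1 h2 => by push_cast at h2 ⊢; refine ⟨by omega, by omega, by omega⟩)]
    ring
  -- decompose the list product
  have hofn : List.ofFn A = A 0 :: List.ofFn (fun i : Fin k => A i.succ) := by
    rw [List.ofFn_succ]
  obtain ⟨hz, he⟩ := col_support_prod νf (List.ofFn fun i : Fin k => A i.succ)
      (by
        intro N hN μ w hw
        rw [List.mem_ofFn] at hN
        obtain ⟨i, rfl⟩ := hN
        exact hA0 _ μ w hw)
      (A 0) (hA0 0)
  rw [hofn, Finset.sum_eq_single νf (fun w _ hw => hz _ w hw)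
    (fun h => absurd (Finset.mem_univ νf) h), he]
  have hmap : (List.map (fun N => N νf νf) (List.ofFn fun i : Fin k => A i.succ)).prod
      = ∏ i : Fin k, A i.succ νf νf := by
    rw [List.map_ofFn, List.prod_ofFn]; rfl
  rw [hmap]
  simp only [hdiag]
  have hIci0 : Finset.Ici (0 : Fin (k + 1)) = Finset.univ := by
    ext j; simp [Fin.zero_le]
  have hP : (∏ j : Fin (k + 1), ξ j) ≠ 0 := Finset.prod_ne_zero_iff.mpr fun i _ => hξ i
  rcases Nat.eq_zero_or_pos ν with h0 | hpos
  · -- ν = 0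
    subst h0
    have hνf0 : νf = ⟨0, by omega⟩ := rfl
    rw [← hνf0]
    rw [hA, if_neg (lt_irrefl _), hρfin, if_pos rfl, hIcc, hνfval,
      hprod_one 0 _ _ (fun n h1 h2 => by push_cast at h2 ⊢; refine ⟨by omega, by omega, by omega⟩)]
    rw [if_pos rfl, one_mul, Fin.prod_univ_succ]
    simp only [Nat.cast_zero, neg_zero, zpow_zero, one_mul, mul_one]
  · -- ν > 0
    have hνfeq : (⟨0, by omega⟩ : Fin m) ≠ νf → True := fun _ => trivial
    rw [hA, if_pos (by show 0 < (νf : ℕ); exact hpos), hρfin, if_pos rfl, hIcc, hνfval,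
      hprod_one 0 _ _ (fun n h1 h2 => by refine ⟨by omega, by omega, by omega⟩)]
    rw [if_neg (by omega)]
    have h1 : ξ 0 ^ (-(ν : ℤ)) * ∏ i : Fin k, ξ i.succ ^ (-(ν : ℤ))
        = (∏ j : Fin (k + 1), ξ j) ^ (-(ν : ℤ)) := by
      rw [← Fin.prod_univ_succ (fun j : Fin (k + 1) => ξ j ^ (-(ν : ℤ)))]
      exact Finset.prod_zpow _ _ _
    have h2 : (∏ j : Fin (k + 1), ξ j) ^ (m - ν)
        = (∏ j : Fin (k + 1), ξ j) ^ m * (∏ j : Fin (k + 1), ξ j) ^ (-(ν : ℤ)) := by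
      rw [zpow_neg, zpow_natCast]
      exact pow_sub₀ _ hP (le_of_lt hν)
    simp only [mul_div_assoc]
    rw [Finset.prod_mul_distrib, h2, ← h1,
      Fin.prod_univ_succ (fun i : Fin (k + 1) => (ρ₀ : ℂ) /
        ((∏ j ∈ Finset.Ici i, ξ j) ^ m - (1 - (ρ₀ : ℂ) + (ρ₀ : ℂ) * τ ^ (k + 1 - (i : ℕ))))),
      hIci0]
    ring
end

section
/- Let m ≥ 1, τ and ξ_1,...,ξ_k complex numbers, and ρ : ℤ → [0,1] an m-periodic function; set φ(i,n) = 1 - ρ(n) + ρ(n)τ^{k-i+1} and assume |Π_{n=1}^m φ(i,n)| < |ξ_i···ξ_k|^m for every i. Define the m×m matrices A_i as in formula (5) of the paper. Then Σ_{0 < s_1 < ... < s_k} Π_{i=1}^k ( ρ(s_i)·ξ_i^{-s_i}·Π_{n=s_{i-1}+1}^{s_i-1} φ(i,n) ) = Σ_{v_1,...,v_k=0}^{m-1} A_1(0,v_1)·A_2(v_1,v_2)···A_k(v_{k-1},v_k), i.e., the multiple sum equals the sum of the entries in the top row of the matrix product A_1···A_k. -/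
/-
Write `X a = ξ a ⋯ ξ (k-1)` (so `X k = 1` and `ξ i = X i / X (i+1)`). Because `s 0 = 0` and
`X k = 1`, the powers `ξ i ^ (-s (i+1))` telescope into `X i ^ (s i - s (i+1))`, so the summand
becomes a product of step weights `ρ b * X i ^ (a - b) * ∏_{a<n<b} φ i n` along consecutive
pairs `(a, b) = (s i, s (i+1))`. These weights are unchanged when `a` and `b` are both shifted
by a multiple of `m`, so only the residue of `a` mod `m` matters: in the gap coordinates
`s (i+1) - s i - 1` the multiple sum is a path sum of a finite-state chain on `Fin m`, and it
equals the top-row sum of the product of the transfer matrices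
`B i μ ν = ∑_{b > μ, b ≡ ν} weight (μ, b)`. Each entry is a geometric series with ratio
`∏_{n=1}^m φ i n / X i ^ m`, which converges by hypothesis. Finally `A i = D i⁻¹ * B i * D (i+1)`
with `D a = diagonal (μ ↦ X a ^ μ)`, so the product of the `A i` is that of the `B i`
conjugated by `D 0` (whose `(0,0)` entry is `1`) and `D k = 1`.
-/

open Finset Function

section Fiberwise

variable {α ι 𝕜 : Type*} [Fintype ι]

lemma summable_of_summable_preimage {f : α → ℝ} (hf : 0 ≤ f) (c : α → ι)
    (h : ∀ v, Summable fun x : c ⁻¹' {v} => f x) : Summable f := by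
  rw [← (Equiv.sigmaFiberEquiv c).summable_iff]
  exact (summable_sigma_of_nonneg fun _ => hf _).2 ⟨h, .of_finite⟩

lemma hasSum_sum_of_hasSum_preimage [NormedAddCommGroup 𝕜] [CompleteSpace 𝕜] {f : α → 𝕜}
    {a : ι → 𝕜} (c : α → ι) (hf : Summable f) (h : ∀ v, HasSum (fun x : c ⁻¹' {v} => f x) (a v)) :
    HasSum f (∑ v, a v) := by
  have hfib := hf.hasSum.tsum_fiberwise c
  simp only [fun v => (h v).tsum_eq] at hfib
  rw [(hasSum_fintype a).unique hfib]
  exact hf.hasSum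

end Fiberwise

lemma summable_prod_apply_of_nonneg {α : Type*} :
    ∀ {k : ℕ} {G : Fin k → α → ℝ}, (∀ i, 0 ≤ G i) → (∀ i, Summable (G i)) →
      Summable fun t : Fin k → α => ∏ i, G i (t i)
  | 0, _, _, _ => by simpa using Summable.of_finite
  | _ + 1, G, hG0, hG => by
    rw [← (Fin.consEquiv fun _ => α).summable_iff]
    have htail := summable_prod_apply_of_nonneg (fun i => hG0 i.succ) fun i => hG i.succ
    refine ((hG 0).mul_of_nonneg htail (hG0 0)
      fun t => prod_nonneg fun i _ => hG0 i.succ (t i)).congr fun p => ?_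
    simp [Fin.prod_univ_succ]

section Walk

variable {σ α : Type*}

def walkState (next : σ → α → σ) : {k : ℕ} → σ → (Fin k → α) → Fin k → σ
  | 0, _, _ => finZeroElim
  | _ + 1, μ, t => Fin.cons μ (walkState next (next μ (t 0)) (Fin.tail t))

@[simp] lemma walkState_zero (next : σ → α → σ) {k : ℕ} (μ : σ) (t : Fin (k + 1) → α) :
    walkState next μ t 0 = μ := rfl

@[simp] lemma walkState_succ (next : σ → α → σ) {k : ℕ} (μ : σ) (t : Fin (k + 1) → α)
    (i : Fin k) : walkState next μ t i.succ = walkState next (next μ (t 0)) (Fin.tail t) i := rfl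

variable {𝕜 : Type*} [NormedField 𝕜] [CompleteSpace 𝕜] [Fintype σ] [DecidableEq σ]

theorem hasSum_prod_walkState (next : σ → α → σ) :
    ∀ {k : ℕ} (g : Fin k → σ → α → 𝕜) (M : Fin k → Matrix σ σ 𝕜),
      (∀ i μ, Summable fun a => ‖g i μ a‖) →
      (∀ i μ ν, HasSum (fun a : next μ ⁻¹' {ν} => g i μ a) (M i μ ν)) → ∀ μ₀,
      HasSum (fun t : Fin k → α => ∏ i, g i (walkState next μ₀ t i) (t i))
        (∑ ν, (List.ofFn M).prod μ₀ ν)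
  | 0, g, M, _, _, μ₀ => by
    simp [Matrix.one_apply]
  | k + 1, g, M, hg, hM, μ₀ => by
    set S : σ → 𝕜 := fun ν => ∑ w, (List.ofFn fun i : Fin k => M i.succ).prod ν w
    have htail (ν : σ) := hasSum_prod_walkState next (fun i => g i.succ) (fun i => M i.succ)
      (fun i => hg i.succ) (fun i => hM i.succ) ν
    set F : α × (Fin k → α) → 𝕜 := fun p =>
      g 0 μ₀ p.1 * ∏ i, g i.succ (walkState next (next μ₀ p.1) p.2 i) (p.2 i)
    set G : Fin k → α → ℝ := fun i a => ∑ μ, ‖g i.succ μ a‖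
    have hF : Summable F := by
      have hG : Summable fun t : Fin k → α => ∏ i, G i (t i) :=
        summable_prod_apply_of_nonneg (fun i a => by positivity)
          fun i => summable_sum fun μ _ => hg i.succ μ
      refine .of_norm_bounded ((hg 0 μ₀).mul_of_nonneg hG (fun _ => norm_nonneg _)
        fun t => prod_nonneg fun i _ => by positivity) fun p => ?_
      simp only [F, norm_mul, norm_prod]
      gcongr with i
      exact single_le_sum (f := fun μ => ‖g i.succ μ (p.2 i)‖) (fun _ _ => norm_nonneg _)
        (mem_univ _)
    have hfirst := hF.hasSum.prod_fiberwise fun a => (htail (next μ₀ a)).mul_left (g 0 μ₀ a)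
    have hrow : HasSum (fun a => g 0 μ₀ a * S (next μ₀ a)) (∑ ν, M 0 μ₀ ν * S ν) :=
      hasSum_sum_of_hasSum_preimage (next μ₀) hfirst.summable fun ν =>
        ((hM 0 μ₀ ν).mul_right (S ν)).congr_fun fun a => by rw [a.2]
    have hval : ∑ ν, M 0 μ₀ ν * S ν = ∑ ν, (List.ofFn M).prod μ₀ ν := by
      simp only [S, List.ofFn_succ, List.prod_cons, Matrix.mul_apply, mul_sum]
      exact sum_comm
    rw [← (Fin.consEquiv fun _ => α).hasSum_iff, ← hval, ← hfirst.unique hrow]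
    convert hF.hasSum using 1
    funext p
    simp only [Function.comp_apply, Fin.prod_univ_succ]
    rfl

end Walk

open Matrix in
lemma Matrix.list_prod_ofFn_diagonal_conj {n 𝕜 : Type*} [Fintype n] [DecidableEq n] [Field 𝕜] :
    ∀ {k : ℕ} (d : ℕ → n → 𝕜), (∀ a μ, d a μ ≠ 0) → ∀ B : Fin k → Matrix n n 𝕜,
      (List.ofFn fun i => diagonal (d i)⁻¹ * B i * diagonal (d (i + 1))).prod =
        diagonal (d 0)⁻¹ * (List.ofFn B).prod * diagonal (d k)
  | 0, d, hd, B => by simp [diagonal_mul_diagonal, hd]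
  | k + 1, d, hd, B => by
    have ih := list_prod_ofFn_diagonal_conj (fun a => d (a + 1)) (fun a => hd (a + 1))
      fun i => B i.succ
    simp only [List.ofFn_succ, List.prod_cons, Fin.val_succ, Fin.val_zero, zero_add] at ih ⊢
    rw [ih]
    simp only [← Matrix.mul_assoc, Matrix.mul_assoc _ (diagonal (d 1)), diagonal_mul_diagonal]
    simp [hd]

section Periodic

variable {M : Type*} [CommMonoid M] {f : ℤ → M} {c : ℤ}

lemma Function.Periodic.prod_Ico_add_eq (hf : Periodic f c) (hc : 0 ≤ c) (a b : ℤ) :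
    ∏ n ∈ Ico a (a + c), f n = ∏ n ∈ Ico b (b + c), f n := by
  have step (a : ℤ) : ∏ n ∈ Ico (a + 1) (a + 1 + c), f n = ∏ n ∈ Ico a (a + c), f n := by
    rcases hc.eq_or_lt with rfl | hc
    · simp
    rw [← insert_Ico_succ_left_eq_Ico (by omega : a < a + c), Order.succ_eq_add_one,
      show a + 1 + c = Order.succ (a + c) by rw [Order.succ_eq_add_one]; ring,
      ← insert_Ico_right_eq_Ico_succ (by omega : a + 1 ≤ a + c), prod_insert (by simp),
      prod_insert (by simp), hf, mul_comm]
  have key (a : ℤ) : ∏ n ∈ Ico a (a + c), f n = ∏ n ∈ Ico 0 (0 + c), f n := by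
    induction a using Int.induction_on with
    | zero => rfl
    | succ i ih => rw [step, ih]
    | pred i ih => rw [← ih, ← step, sub_add_cancel]
  rw [key a, key b]

lemma Function.Periodic.prod_Ioo_add_add (hf : Periodic f c) (a b : ℤ) :
    ∏ n ∈ Ioo (a + c) (b + c), f n = ∏ n ∈ Ioo a b, f n := by
  rw [← map_add_right_Ioo, prod_map]
  exact prod_congr rfl fun n _ => hf n

lemma Int.prod_Ioo_add_eq_prod_Ioo_mul_prod_Ico {a b c : ℤ} (hab : a < b) (hc : 0 ≤ c) :
    ∏ n ∈ Ioo a (b + c), f n = (∏ n ∈ Ioo a b, f n) * ∏ n ∈ Ico b (b + c), f n := by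
  rw [← prod_union (disjoint_left.2 fun n h h' => by simp at h h'; omega)]
  congr 1
  ext n
  simp only [mem_Ioo, mem_union, mem_Ico]
  omega

end Periodic

section StepWeight

variable {𝕜 : Type*} [Field 𝕜]

noncomputable def stepWeight (ρ ψ : ℤ → 𝕜) (x : 𝕜) (a b : ℤ) : 𝕜 :=
  ρ b * x ^ (a - b) * ∏ n ∈ Ioo a b, ψ n

variable {m : ℕ} {ρ ψ : ℤ → 𝕜} {x : 𝕜}

lemma stepWeight_add_mul_add_mul (hρ : Periodic ρ m) (hψ : Periodic ψ m) (a b q : ℤ) :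
    stepWeight ρ ψ x (a + q * m) (b + q * m) = stepWeight ρ ψ x a b := by
  have hρq : Periodic ρ (q * m) := by simpa using hρ.int_mul q
  have hψq : Periodic ψ (q * m) := by simpa using hψ.int_mul q
  simp only [stepWeight, hρq b, hψq.prod_Ioo_add_add, add_sub_add_right_eq_sub]

lemma stepWeight_add_period (hx : x ≠ 0) (hρ : Periodic ρ m) (hψ : Periodic ψ m) {a b : ℤ}
    (hab : a < b) :
    stepWeight ρ ψ x a (b + m) = stepWeight ρ ψ x a b * ((∏ n ∈ Icc 1 (m : ℤ), ψ n) / x ^ m) := by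
  have hwindow : ∏ n ∈ Ico b (b + m), ψ n = ∏ n ∈ Icc 1 (m : ℤ), ψ n := by
    rw [hψ.prod_Ico_add_eq (by positivity) b 1]
    congr 1
    ext n
    simp only [mem_Ico, mem_Icc]
    omega
  simp only [stepWeight, hρ b, Int.prod_Ioo_add_eq_prod_Ioo_mul_prod_Ico hab (Nat.cast_nonneg m),
    hwindow, sub_add_eq_sub_sub, zpow_sub₀ hx (a - b), zpow_natCast]
  ring

lemma stepWeight_add_mul_period (hx : x ≠ 0) (hρ : Periodic ρ m) (hψ : Periodic ψ m) {a b : ℤ}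
    (hab : a < b) (j : ℕ) :
    stepWeight ρ ψ x a (b + j * m) =
      stepWeight ρ ψ x a b * ((∏ n ∈ Icc 1 (m : ℤ), ψ n) / x ^ m) ^ j := by
  induction j with
  | zero => simp
  | succ j ih =>
    rw [Nat.cast_succ, add_one_mul, ← add_assoc,
      stepWeight_add_period hx hρ hψ (lt_add_of_lt_of_nonneg hab (by positivity)),
      ih, pow_succ, mul_assoc]

end StepWeight

section Residue

variable {m : ℕ}

def nextResidue (m : ℕ) [NeZero m] (μ : Fin m) (t : ℕ) : Fin m := Fin.ofNat m (μ + t + 1)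

/-- The least position `b > μ` with `b ≡ ν [MOD m]`. -/
def firstHit (μ ν : Fin m) : ℕ := if (μ : ℕ) < ν then ν else ν + m

lemma lt_firstHit (μ ν : Fin m) : (μ : ℕ) < firstHit μ ν := by
  unfold firstHit; split_ifs with h <;> omega

lemma firstHit_mod (μ ν : Fin m) : firstHit μ ν % m = ν := by
  unfold firstHit; split_ifs <;> simp [Nat.mod_eq_of_lt ν.2]

variable [NeZero m]

lemma nextResidue_preimage (μ ν : Fin m) :
    nextResidue m μ ⁻¹' {ν} = Set.range fun j : ℕ => firstHit μ ν - (μ + 1) + j * m := by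
  have hlt := lt_firstHit μ ν
  ext t
  simp only [Set.mem_preimage, Set.mem_singleton_iff, Set.mem_range, nextResidue, Fin.ext_iff,
    Fin.val_ofNat]
  constructor
  · intro ht
    refine ⟨t / m, ?_⟩
    have hmod : t ≡ firstHit μ ν - (μ + 1) [MOD m] := by
      refine Nat.ModEq.add_left_cancel' (μ + 1) ?_
      rw [Nat.ModEq, Nat.add_sub_cancel' hlt, firstHit_mod, ← ht]
      ring_nf
    have hsmall : firstHit μ ν - (μ + 1) < m := by unfold firstHit; split_ifs <;> omega
    rw [← Nat.mod_eq_of_lt hsmall, ← hmod, Nat.mod_add_div']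
  · rintro ⟨j, rfl⟩
    rw [show (μ : ℕ) + (firstHit μ ν - (μ + 1) + j * m) + 1 = firstHit μ ν + j * m by omega,
      Nat.add_mul_mod_self_right, firstHit_mod]

lemma hasSum_preimage_nextResidue_iff {E : Type*} [AddCommMonoid E] [TopologicalSpace E]
    {f : ℕ → E} {a : E} {μ ν : Fin m} :
    HasSum (fun t : nextResidue m μ ⁻¹' {ν} => f t) a ↔
      HasSum (fun j => f (firstHit μ ν - (μ + 1) + j * m)) a := by
  rw [nextResidue_preimage]
  exact ((add_right_injective _).comp (mul_left_injective₀ (NeZero.ne m))).hasSum_range_iff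

lemma val_walkState_nextResidue {k : ℕ} (μ₀ : Fin m) (t : Fin k → ℕ) (i : Fin k) :
    ((walkState (nextResidue m) μ₀ t i : Fin m) : ℕ) =
      (μ₀ + Fin.partialSum (fun j => t j + 1) i.castSucc) % m := by
  induction k generalizing μ₀ with
  | zero => exact i.elim0
  | succ k ih =>
    cases i using Fin.cases with
    | zero => simp [Nat.mod_eq_of_lt μ₀.2]
    | succ i =>
      rw [walkState_succ, ih, ← Fin.succ_castSucc, Fin.partialSum_succ']
      simp only [nextResidue, Fin.val_ofNat, Nat.mod_add_mod, add_assoc]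
      rfl

end Residue

def gapsEquiv (k : ℕ) : {s : Fin (k + 1) → ℕ // s 0 = 0 ∧ StrictMono s} ≃ (Fin k → ℕ) where
  toFun s i := s.1 i.succ - s.1 i.castSucc - 1
  invFun t := ⟨Fin.partialSum fun i => t i + 1, Fin.partialSum_zero _,
    Fin.strictMono_iff_lt_succ.2 fun i => by simp [Fin.partialSum_succ]⟩
  left_inv s := by
    ext i
    induction i using Fin.induction with
    | zero => simp [s.2.1]
    | succ i ih =>
      have := s.2.2 (Fin.castSucc_lt_succ (i := i))
      simp only at ih ⊢
      rw [Fin.partialSum_succ, ih]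
      omega
  right_inv t := funext fun i => by simp [Fin.partialSum_succ]

section TailProd

variable {𝕜 : Type*} [Field 𝕜] {k : ℕ} (ξ : Fin k → 𝕜)

def tailProd (a : ℕ) : 𝕜 := ∏ j : Fin k with a ≤ j.val, ξ j

lemma tailProd_self : tailProd ξ k = 1 :=
  prod_eq_one fun j hj => absurd (mem_filter.1 hj).2 (not_le.2 j.2)

lemma tailProd_eq_prod_Ici (i : Fin k) : tailProd ξ i = ∏ j ∈ Ici i, ξ j := by
  refine prod_congr (Finset.ext fun j => ?_) fun _ _ => rfl
  simp only [mem_filter, mem_univ, true_and, mem_Ici, Fin.le_def]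

lemma tailProd_eq_mul (i : Fin k) : tailProd ξ i = ξ i * tailProd ξ (i + 1) := by
  rw [tailProd, ← prod_erase_mul _ _ (by simp : i ∈ _), mul_comm]
  congr 2
  ext j
  simp only [mem_erase, mem_filter, mem_univ, true_and, ne_eq, Fin.ext_iff]
  omega

variable {ξ}

lemma tailProd_ne_zero (hξ : ∀ i, ξ i ≠ 0) (a : ℕ) : tailProd ξ a ≠ 0 :=
  prod_ne_zero_iff.2 fun j _ => hξ j

lemma prod_stepWeight_tailProd (hξ : ∀ i, ξ i ≠ 0) (ρ : ℤ → 𝕜) (φ : Fin k → ℤ → 𝕜)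
    (s : Fin (k + 1) → ℤ) (hs : s 0 = 0) :
    ∏ i, stepWeight ρ (φ i) (tailProd ξ i) (s i.castSucc) (s i.succ) =
      ∏ i, ρ (s i.succ) * ξ i ^ (-s i.succ) * ∏ n ∈ Ioo (s i.castSucc) (s i.succ), φ i n := by
  simp only [stepWeight, prod_mul_distrib]
  congr 2
  have hX := tailProd_ne_zero hξ
  have hshift : ∏ i : Fin k, tailProd ξ (i + 1) ^ s i.succ =
      ∏ i : Fin k, tailProd ξ i ^ s i.castSucc := by
    have h0 := Fin.prod_univ_succ fun j : Fin (k + 1) => tailProd ξ j ^ s j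
    have hlast := Fin.prod_univ_castSucc fun j : Fin (k + 1) => tailProd ξ j ^ s j
    simp only [Fin.val_zero, hs, zpow_zero, one_mul, Fin.val_last, tailProd_self, _root_.one_zpow,
      mul_one, Fin.val_succ, Fin.val_castSucc] at h0 hlast
    rw [← h0, hlast]
  calc ∏ i : Fin k, tailProd ξ i ^ (s i.castSucc - s i.succ)
      = (∏ i : Fin k, tailProd ξ i ^ s i.castSucc) * ∏ i : Fin k, (tailProd ξ i ^ s i.succ)⁻¹ := by
        simp only [zpow_sub₀ (hX _), div_eq_mul_inv, prod_mul_distrib]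
    _ = ∏ i : Fin k, (tailProd ξ i ^ s i.succ)⁻¹ * tailProd ξ (i + 1) ^ s i.succ := by
        rw [← hshift, prod_mul_distrib, mul_comm]
    _ = ∏ i, ξ i ^ (-s i.succ) := by
        refine prod_congr rfl fun i _ => ?_
        rw [tailProd_eq_mul ξ i, mul_zpow, zpow_neg, mul_inv, mul_assoc,
          inv_mul_cancel₀ (zpow_ne_zero _ (hX _)), mul_one]

end TailProd

section Transfer

variable {𝕜 : Type*} {m : ℕ} {ρ ψ : ℤ → 𝕜} {x : 𝕜}

/-- The sum of `stepWeight ρ ψ x μ b` over all `b > μ` with `b ≡ ν [MOD m]`: a geometric series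
starting at `b = firstHit μ ν`. -/
noncomputable def transferMatrix [Field 𝕜] (m : ℕ) (ρ ψ : ℤ → 𝕜) (x : 𝕜) :
    Matrix (Fin m) (Fin m) 𝕜 :=
  Matrix.of fun μ ν =>
    stepWeight ρ ψ x μ (firstHit μ ν) * (1 - (∏ n ∈ Icc 1 (m : ℤ), ψ n) / x ^ m)⁻¹

lemma transferMatrix_apply [Field 𝕜] (μ ν : Fin m) :
    transferMatrix m ρ ψ x μ ν =
      stepWeight ρ ψ x μ (firstHit μ ν) * (1 - (∏ n ∈ Icc 1 (m : ℤ), ψ n) / x ^ m)⁻¹ :=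
  rfl

lemma inv_mul_transferMatrix_mul [Field 𝕜] (hρ : Periodic ρ m) {y z : 𝕜} (hxzy : x = z * y)
    (hz : z ≠ 0) (hy : y ≠ 0) (hden : x ^ m ≠ ∏ n ∈ Icc 1 (m : ℤ), ψ n) (μ ν : Fin m) :
    (x ^ (μ : ℕ))⁻¹ * transferMatrix m ρ ψ x μ ν * y ^ (ν : ℕ) =
      if (μ : ℕ) < (ν : ℕ) then
        (x ^ m * z ^ (-((ν : ℕ) : ℤ)) * ρ ((ν : ℕ) : ℤ) *
            ∏ n ∈ Ioo ((μ : ℕ) : ℤ) ((ν : ℕ) : ℤ), ψ n) / (x ^ m - ∏ n ∈ Icc 1 (m : ℤ), ψ n)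
      else
        (z ^ (-((ν : ℕ) : ℤ)) * ρ ((ν : ℕ) : ℤ) *
            ∏ n ∈ Ioo ((μ : ℕ) : ℤ) (((ν : ℕ) : ℤ) + m), ψ n) /
          (x ^ m - ∏ n ∈ Icc 1 (m : ℤ), ψ n) := by
  subst hxzy
  have hden' : (z * y) ^ m - ∏ n ∈ Icc 1 (m : ℤ), ψ n ≠ 0 := sub_ne_zero.2 hden
  simp only [transferMatrix, Matrix.of_apply, stepWeight, firstHit]
  split_ifs
  · rw [zpow_sub₀ (mul_ne_zero hz hy), zpow_neg, zpow_natCast, zpow_natCast, zpow_natCast]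
    field_simp
    ring
  · push_cast
    rw [hρ, zpow_sub₀ (mul_ne_zero hz hy), zpow_add₀ (mul_ne_zero hz hy), zpow_neg,
      zpow_natCast, zpow_natCast, zpow_natCast, zpow_natCast]
    field_simp
    ring

lemma stepWeight_firstHit_add_mul [Field 𝕜] (hx : x ≠ 0) (hρ : Periodic ρ m)
    (hψ : Periodic ψ m) (μ ν : Fin m) (j : ℕ) :
    stepWeight ρ ψ x μ (μ + (firstHit μ ν - (μ + 1) + j * m : ℕ) + 1) =
      stepWeight ρ ψ x μ (firstHit μ ν) * ((∏ n ∈ Icc 1 (m : ℤ), ψ n) / x ^ m) ^ j := by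
  have hlt := lt_firstHit μ ν
  rw [← stepWeight_add_mul_period hx hρ hψ (by exact_mod_cast hlt)]
  congr 1
  push_cast [Nat.cast_sub hlt]
  ring

variable [NormedField 𝕜] [NeZero m]

lemma hasSum_stepWeight_preimage_nextResidue (hx : x ≠ 0) (hρ : Periodic ρ m)
    (hψ : Periodic ψ m) (hr : ‖(∏ n ∈ Icc 1 (m : ℤ), ψ n) / x ^ m‖ < 1) (μ ν : Fin m) :
    HasSum (fun t : nextResidue m μ ⁻¹' {ν} => stepWeight ρ ψ x μ (μ + (t : ℕ) + 1))
      (transferMatrix m ρ ψ x μ ν) := by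
  rw [transferMatrix_apply, hasSum_preimage_nextResidue_iff
    (f := fun t : ℕ => stepWeight ρ ψ x μ (μ + t + 1))]
  simp only [stepWeight_firstHit_add_mul hx hρ hψ]
  exact (hasSum_geometric_of_norm_lt_one hr).mul_left _

lemma summable_norm_stepWeight (hx : x ≠ 0) (hρ : Periodic ρ m) (hψ : Periodic ψ m)
    (hr : ‖(∏ n ∈ Icc 1 (m : ℤ), ψ n) / x ^ m‖ < 1) (μ : Fin m) :
    Summable fun t : ℕ => ‖stepWeight ρ ψ x μ (μ + t + 1)‖ := by
  refine summable_of_summable_preimage (fun _ => norm_nonneg _) (nextResidue m μ) fun ν => ?_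
  refine (hasSum_preimage_nextResidue_iff (f := fun t : ℕ => ‖stepWeight ρ ψ x μ (μ + t + 1)‖)
    (a := ‖stepWeight ρ ψ x μ (firstHit μ ν)‖ * (1 - ‖(∏ n ∈ Icc 1 (m : ℤ), ψ n) / x ^ m‖)⁻¹)
    |>.2 ?_).summable
  simp only [stepWeight_firstHit_add_mul hx hρ hψ, norm_mul, norm_pow]
  exact (hasSum_geometric_of_lt_one (norm_nonneg _) hr).mul_left _

end Transfer

lemma stepWeight_partialSum {𝕜 : Type*} [Field 𝕜] {k m : ℕ} [NeZero m] {ρ ψ : ℤ → 𝕜} {x : 𝕜}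
    (hρ : Periodic ρ m) (hψ : Periodic ψ m) (t : Fin k → ℕ) (i : Fin k) :
    stepWeight ρ ψ x (Fin.partialSum (fun j => t j + 1) i.castSucc : ℕ)
        (Fin.partialSum (fun j => t j + 1) i.succ : ℕ) =
      stepWeight ρ ψ x ((walkState (nextResidue m) 0 t i : Fin m) : ℕ)
        (((walkState (nextResidue m) 0 t i : Fin m) : ℕ) + t i + 1) := by
  rw [val_walkState_nextResidue, Fin.partialSum_succ, Fin.val_zero, zero_add]
  generalize Fin.partialSum (fun j => t j + 1) i.castSucc = a
  have ha : (a : ℤ) = (a % m : ℕ) + (a / m : ℕ) * m := by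
    exact_mod_cast (Nat.mod_add_div' a m).symm
  conv_rhs => rw [← stepWeight_add_mul_add_mul hρ hψ _ _ (a / m : ℕ)]
  congr 1
  push_cast at ha ⊢
  linear_combination ha

theorem hasSum_prod_stepWeight {𝕜 : Type*} [NormedField 𝕜] [CompleteSpace 𝕜] {k m : ℕ}
    [NeZero m] {ξ : Fin k → 𝕜} {ρ : ℤ → 𝕜} {φ : Fin k → ℤ → 𝕜} (hξ : ∀ i, ξ i ≠ 0)
    (hρ : Periodic ρ m) (hφ : ∀ i, Periodic (φ i) m)
    (hr : ∀ i : Fin k, ‖(∏ n ∈ Icc 1 (m : ℤ), φ i n) / tailProd ξ i ^ m‖ < 1) :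
    HasSum
      (fun s : {s : Fin (k + 1) → ℕ // s 0 = 0 ∧ StrictMono s} =>
        ∏ i : Fin k,
          ρ (s.1 i.succ : ℤ) * ξ i ^ (-(s.1 i.succ : ℤ)) *
            ∏ n ∈ Ioo ((s.1 i.castSucc : ℕ) : ℤ) ((s.1 i.succ : ℕ) : ℤ), φ i n)
      (∑ ν, (List.ofFn fun i => transferMatrix m ρ (φ i) (tailProd ξ i)).prod 0 ν) := by
  have hX := tailProd_ne_zero hξ
  rw [← (gapsEquiv k).symm.hasSum_iff]
  refine (hasSum_prod_walkState (nextResidue m)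
    (fun i μ t => stepWeight ρ (φ i) (tailProd ξ i) μ (μ + t + 1)) _
    (fun i => summable_norm_stepWeight (hX i) hρ (hφ i) (hr i))
    (fun i => hasSum_stepWeight_preimage_nextResidue (hX i) hρ (hφ i) (hr i)) 0).congr_fun
    fun t => ?_
  rw [Function.comp_apply, ← prod_stepWeight_tailProd hξ ρ φ
    (fun j => ((gapsEquiv k).symm t).1 j) (by simp [gapsEquiv])]
  exact prod_congr rfl fun i _ => stepWeight_partialSum hρ (hφ i) t i

open Matrix in
/-- Main theorem (periodic case): for an `m`-periodic `ρ : ℤ → [0,1]`,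
`φ i n = 1 - ρ n + ρ n · τ^{k-i}` (0-indexed `i`, matching `τ^{k-i+1}`), and
`|∏_{n=1}^m φ i n| < |ξ i ⋯ ξ (k-1)|^m` for all `i`, the sum over strictly increasing
tuples `0 = s 0 < s 1 < ⋯ < s k` of
`∏_i ρ (s (i+1)) ξ i ^{-s (i+1)} ∏_{n=s i+1}^{s (i+1)-1} φ i n`
converges (absolutely) to the sum of the entries in the top row of the matrix product
`A 0 · A 1 ⋯ A (k-1)`, where `A i` are the `m×m` matrices of formula (5). -/
theorem periodic_step_bernoulli_matrix_formula (k m : ℕ) (hm : 1 ≤ m)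
    (τ : ℂ) (ξ : Fin k → ℂ) (hξ : ∀ i, ξ i ≠ 0)
    (ρfun : ℤ → ℂ) (hper : ∀ n : ℤ, ρfun (n + m) = ρfun n)
    (φ : Fin k → ℤ → ℂ)
    (hφ : ∀ i n, φ i n = 1 - ρfun n + ρfun n * τ ^ (k - (i : ℕ)))
    (habs : ∀ i : Fin k,
      ‖∏ n ∈ Finset.Icc (1 : ℤ) m, φ i n‖ <
        ‖∏ j ∈ Finset.Ici i, ξ j‖ ^ m)
    (A : Fin k → Matrix (Fin m) (Fin m) ℂ)
    (hA : ∀ (i : Fin k) (μ ν : Fin m), A i μ ν =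
      if (μ : ℕ) < (ν : ℕ) then
        ((∏ j ∈ Finset.Ici i, ξ j) ^ m * ξ i ^ (-((ν : ℕ) : ℤ)) *
            ρfun ((ν : ℕ) : ℤ) * ∏ n ∈ Finset.Ioo ((μ : ℕ) : ℤ) ((ν : ℕ) : ℤ), φ i n) /
          ((∏ j ∈ Finset.Ici i, ξ j) ^ m - ∏ n ∈ Finset.Icc (1 : ℤ) m, φ i n)
      else
        (ξ i ^ (-((ν : ℕ) : ℤ)) * ρfun ((ν : ℕ) : ℤ) *
            ∏ n ∈ Finset.Ioo ((μ : ℕ) : ℤ) (((ν : ℕ) : ℤ) + m), φ i n) /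
          ((∏ j ∈ Finset.Ici i, ξ j) ^ m - ∏ n ∈ Finset.Icc (1 : ℤ) m, φ i n)) :
    HasSum
      (fun s : {s : Fin (k + 1) → ℕ // s 0 = 0 ∧ StrictMono s} =>
        ∏ i : Fin k,
          ρfun (s.1 i.succ : ℤ) * ξ i ^ (-(s.1 i.succ : ℤ)) *
            ∏ n ∈ Finset.Ioo ((s.1 i.castSucc : ℕ) : ℤ) ((s.1 i.succ : ℕ) : ℤ), φ i n)
      (∑ w : Fin m, (List.ofFn A).prod ⟨0, by omega⟩ w) := by
  have : NeZero m := ⟨by omega⟩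
  have hX := tailProd_ne_zero hξ
  have hratio (i : Fin k) : ‖(∏ n ∈ Icc 1 (m : ℤ), φ i n) / tailProd ξ i ^ m‖ < 1 := by
    rw [norm_div, norm_pow, div_lt_one (pow_pos (norm_pos_iff.2 (hX i)) m),
      tailProd_eq_prod_Ici]
    exact habs i
  set d : ℕ → Fin m → ℂ := fun a μ => tailProd ξ a ^ (μ : ℕ)
  have hconj (i : Fin k) : A i =
      diagonal (d i)⁻¹ * transferMatrix m ρfun (φ i) (tailProd ξ i) * diagonal (d (i + 1)) := by
    ext μ ν
    rw [mul_diagonal, diagonal_mul, Pi.inv_apply, hA, ← tailProd_eq_prod_Ici,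
      inv_mul_transferMatrix_mul hper (tailProd_eq_mul ξ i) (hξ i) (hX _)
        fun h => (habs i).ne (by rw [← tailProd_eq_prod_Ici, ← h, norm_pow])]
  rw [show A = _ from funext hconj, list_prod_ofFn_diagonal_conj d fun a μ => pow_ne_zero _ (hX a)]
  simp only [d, tailProd_self, one_pow, diagonal_one, Matrix.mul_one, diagonal_mul, Pi.inv_apply,
    pow_zero, inv_one, one_mul]
  exact hasSum_prod_stepWeight hξ hper (fun i n => by rw [hφ, hφ, hper]) hratio
end
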